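/- The pure twin group \(\overline{P}_4\) is isomorphic to the free group \(F_7\) of rank 7. -/

import Mathlib

/-- The defining relations of the twin (planar braid) group on `n + 1` strands,
with generators `σ₁, …, σ_n` indexed by `Fin n`: the squares of the generators
and the commutators of pairs of generators at distance greater than one. -/
def twinRels (n : ℕ) : Set (FreeGroup (Fin n)) :=
  {r | (∃ i : Fin n, r = .of i * .of i) ∨
    ∃ i j : Fin n, (i : ℕ) + 1 < (j : ℕ) ∧
      r = .of i * .of j * (.of i)⁻¹ * (.of j)⁻¹}

/-- The twin (planar braid) group `B̄_{n+1}` on `n + 1` strands. -/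
abbrev TwinGroup (n : ℕ) := PresentedGroup (twinRels n)

theorem twinRels_hold (n : ℕ) :
    ∀ r ∈ twinRels n,
      FreeGroup.lift (fun i : Fin n => Equiv.swap (i.castSucc) (i.succ)) r = 1 := by
  rintro r (⟨i, rfl⟩ | ⟨i, j, hij, rfl⟩)
  · simp only [map_mul, FreeGroup.lift_apply_of]
    exact Equiv.swap_mul_self _ _
  · simp only [map_mul, map_inv, FreeGroup.lift_apply_of]
    have hd : (Equiv.swap (i.castSucc) (i.succ)).Disjoint
        (Equiv.swap (j.castSucc) (j.succ)) := by
      intro x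
      by_cases h1 : x = i.castSucc
      · right; subst h1
        apply Equiv.swap_apply_of_ne_of_ne <;> simp [Fin.ext_iff] <;> omega
      by_cases h2 : x = i.succ
      · right; subst h2
        apply Equiv.swap_apply_of_ne_of_ne <;> simp [Fin.ext_iff] <;> omega
      · left; exact Equiv.swap_apply_of_ne_of_ne h1 h2
    rw [hd.commute.eq]
    group

/-- The permutation homomorphism of the twin group on `n + 1` strands,
sending `σ_i` to the adjacent transposition `(i, i+1)`. -/
def twinPerm (n : ℕ) : TwinGroup n →* Equiv.Perm (Fin (n + 1)) :=
  PresentedGroup.toGroup (twinRels_hold n)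

/-!
`P̄₄` is the kernel of `B̄₄ → S₄`, so it has 24 cosets; fix a transversal `τ`. By
Reidemeister–Schreier, each Schreier generator `τ(σᵢ t)⁻¹ σᵢ τ(t)` is a word `c(i, t)` in seven
explicit pure elements `bⱼ`, and `σᵢ · (t, x) = (σᵢ t, c(i, t) x)` defines an action of `B̄₄` on
cosets `× F₇` (its relations are checked on the finite tables). The map `(t, x) ↦ τ(t) β(x)`, where
`β : F₇ → P̄₄` sends the generators to the `bⱼ`, is equivariant, so a pure element `k` moves
`(t₀, 1)` to `(t₀, x)` with `k = β(x)`; and `k ↦ x` is inverse to `β`.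
-/

namespace Equiv.Perm

variable (T F : Type*) [Group F]

/-- The permutations of `T × F` commuting with right multiplication on `F`: these are the maps
`(t, x) ↦ (σ t, c t * x)`, i.e. the wreath product `F ≀ T`. -/
def rightMulEquivariant : Subgroup (Perm (T × F)) :=
  Subgroup.centralizer (Set.range fun y : F => prodCongrRight fun _ : T => Equiv.mulRight y)

variable {T F}

theorem mem_rightMulEquivariant_iff {σ : Perm (T × F)} :
    σ ∈ rightMulEquivariant T F ↔ ∀ t x, σ (t, x) = ((σ (t, 1)).1, (σ (t, 1)).2 * x) := by
  simp only [rightMulEquivariant, Subgroup.mem_centralizer_iff, Set.forall_mem_range,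
    Equiv.ext_iff, Prod.forall, Perm.mul_apply, prodCongrRight_apply, coe_mulRight]
  constructor
  · intro h t x
    have := (h x t 1).symm
    rwa [one_mul] at this
  · intro h y t x
    rw [h t (x * y), h t x]
    simp [mul_assoc]

end Equiv.Perm

def intertwiningSubgroup {G X : Type*} [Group G] (ρ : G →* Equiv.Perm X) (f : X → G) :
    Subgroup G where
  carrier := {g | ∀ x, f (ρ g x) = g * f x}
  one_mem' x := by simp
  mul_mem' {g h} hg hh x := by
    rw [map_mul, Equiv.Perm.mul_apply, hg, hh, mul_assoc]
  inv_mem' {g} hg x := by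
    rw [eq_inv_mul_iff_mul_eq, ← hg, ← Equiv.Perm.mul_apply, ← map_mul, mul_inv_cancel,
      map_one, Equiv.Perm.one_apply]

theorem Subgroup.nonempty_mulEquiv_freeGroup_of_schreierAction {G T α : Type*} [Group G]
    (K : Subgroup G) (b : α → G) (τ : T → G) (t₀ : T) (ρ : G →* Equiv.Perm (T × FreeGroup α))
    (hb : ∀ a, b a ∈ K) (hτ₀ : τ t₀ = 1) (hτ : ∀ t, τ t ∈ K → t = t₀)
    (hρ : ∀ g, ρ g ∈ Equiv.Perm.rightMulEquivariant T (FreeGroup α))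
    (hθ : ∀ g, g ∈ intertwiningSubgroup ρ fun p => τ p.1 * FreeGroup.lift b p.2)
    (hρb : ∀ a, ρ (b a) (t₀, 1) = (t₀, FreeGroup.of a)) :
    Nonempty (K ≃* FreeGroup α) := by
  set β := FreeGroup.lift b
  have hβ (x : FreeGroup α) : β x ∈ K :=
    FreeGroup.range_lift_le (Set.range_subset_iff.2 hb) ⟨x, rfl⟩
  have hθ₀ (g : G) : g = τ (ρ g (t₀, 1)).1 * β (ρ g (t₀, 1)).2 := by
    simpa [hτ₀] using (hθ g (t₀, 1)).symm
  have hfix (k : G) (hk : k ∈ K) : ρ k (t₀, 1) = (t₀, (ρ k (t₀, 1)).2) := by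
    refine Prod.ext (hτ _ ?_) rfl
    rw [← mul_inv_eq_iff_eq_mul.2 (hθ₀ k)]
    exact mul_mem hk (inv_mem (hβ _))
  let ψ : K →* FreeGroup α :=
    { toFun k := (ρ k (t₀, 1)).2
      map_one' := by simp
      map_mul' k l := by
        rw [Subgroup.coe_mul, map_mul, Equiv.Perm.mul_apply, hfix l l.2,
          Equiv.Perm.mem_rightMulEquivariant_iff.1 (hρ k)] }
  refine ⟨MonoidHom.toMulEquiv ψ (β.codRestrict K hβ) ?_ ?_⟩
  · ext k
    change β (ρ k (t₀, 1)).2 = k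
    conv_rhs => rw [hθ₀ k, hfix k k.2, hτ₀, one_mul]
  · ext a
    simp [ψ, β, hρb]

namespace TwinGroup

open PresentedGroup

variable {n : ℕ}

theorem of_mul_self (i : Fin n) : (of i : TwinGroup n) * of i = 1 := by
  have h := one_of_mem (rels := twinRels n) (Or.inl ⟨i, rfl⟩)
  rwa [map_mul] at h

theorem of_mul_of_mul_cancel_left (i : Fin n) (x : TwinGroup n) : of i * (of i * x) = x := by
  rw [← mul_assoc, of_mul_self, one_mul]

theorem inv_of (i : Fin n) : (of i : TwinGroup n)⁻¹ = of i :=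
  inv_eq_of_mul_eq_one_right (of_mul_self i)

theorem commute_of_of {i j : Fin n} (hij : (i : ℕ) + 1 < j) :
    Commute (of i : TwinGroup n) (of j) := by
  have h := one_of_mem (rels := twinRels n) (Or.inr ⟨i, j, hij, rfl⟩)
  rwa [map_mul, map_mul, map_mul, map_inv, map_inv, mul_inv_eq_one, mul_inv_eq_iff_eq_mul] at h

def lift {M : Type*} [Group M] (f : Fin n → M) (hsq : ∀ i, f i * f i = 1)
    (hcomm : ∀ i j : Fin n, (i : ℕ) + 1 < j → Commute (f i) (f j)) : TwinGroup n →* M :=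
  toGroup (f := f) <| by
    rintro r (⟨i, rfl⟩ | ⟨i, j, hij, rfl⟩)
    · simpa using hsq i
    · simp [(hcomm i j hij).eq]

theorem lift_of {M : Type*} [Group M] {f : Fin n → M} {hsq : ∀ i, f i * f i = 1}
    {hcomm : ∀ i j : Fin n, (i : ℕ) + 1 < j → Commute (f i) (f j)} (i : Fin n) :
    lift f hsq hcomm (of i) = f i :=
  toGroup.of _

def ofWord (w : List (Fin n)) : TwinGroup n := (w.map of).prod

theorem map_ofWord {M : Type*} [Monoid M] (f : TwinGroup n →* M) (w : List (Fin n)) :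
    f (ofWord w) = (w.map fun i => f (of i)).prod := by
  simp [ofWord, map_list_prod, List.map_map, Function.comp_def]

theorem twinPerm_of (i : Fin n) : twinPerm n (of i) = Equiv.swap i.castSucc i.succ :=
  toGroup.of _

end TwinGroup

namespace PureTwinFour

open PresentedGroup TwinGroup

def transversalWord : Fin 24 → List (Fin 3) :=
  ![[], [0], [1], [2], [1, 0], [2, 0], [0, 1], [2, 1], [1, 2], [0, 1, 0], [2, 1, 0], [1, 2, 0],
    [2, 0, 1], [1, 2, 1], [0, 1, 2], [2, 0, 1, 0], [1, 2, 1, 0], [0, 1, 2, 0], [1, 2, 0, 1],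
    [0, 1, 2, 1], [1, 2, 0, 1, 0], [0, 1, 2, 1, 0], [0, 1, 2, 0, 1], [0, 1, 2, 0, 1, 0]]

def basisWord : Fin 7 → List (Fin 3) :=
  ![[0, 1, 0, 1, 0, 1], [0, 2, 1, 0, 1, 0, 1, 2], [1, 0, 2, 1, 0, 1, 0, 1, 2, 1],
    [0, 1, 0, 2, 1, 0, 1, 0, 1, 2, 1, 0], [1, 2, 1, 2, 1, 2], [0, 1, 2, 1, 2, 1, 0, 2],
    [0, 1, 0, 2, 1, 2, 1, 0, 2, 1]]

def cosetAct : Fin 3 → Fin 24 → Fin 24 :=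
  ![![1, 0, 6, 5, 9, 3, 2, 12, 14, 4, 15, 17, 7, 19, 8, 10, 21, 11, 22, 13, 23, 16, 18, 20],
    ![2, 4, 0, 8, 1, 11, 9, 13, 3, 6, 16, 5, 18, 7, 17, 20, 10, 14, 12, 22, 15, 23, 19, 21],
    ![3, 5, 7, 0, 10, 1, 12, 2, 13, 15, 4, 16, 6, 8, 19, 9, 11, 21, 20, 14, 18, 17, 23, 22]]

-- `cocycle i t` is the Schreier generator `τ(cosetAct i t)⁻¹ σᵢ τ(t)` in the basis `basisWord`.
open FreeGroup in
def cocycle : Fin 3 → Fin 24 → FreeGroup (Fin 7)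
  | 1, 6 => of 0
  | 1, 9 => (of 0)⁻¹
  | 1, 14 => of 1
  | 1, 17 => (of 1)⁻¹
  | 1, 19 => of 2
  | 1, 21 => of 3
  | 1, 22 => (of 2)⁻¹
  | 1, 23 => (of 3)⁻¹
  | 2, 8 => of 4
  | 2, 11 => of 5
  | 2, 13 => (of 4)⁻¹
  | 2, 14 => of 4
  | 2, 16 => (of 5)⁻¹
  | 2, 17 => of 5
  | 2, 18 => of 6
  | 2, 19 => (of 4)⁻¹
  | 2, 20 => (of 6)⁻¹
  | 2, 21 => (of 5)⁻¹
  | 2, 22 => of 6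
  | 2, 23 => (of 6)⁻¹
  | _, _ => 1

abbrev transversal (t : Fin 24) : TwinGroup 3 := ofWord (transversalWord t)

abbrev basis (j : Fin 7) : TwinGroup 3 := ofWord (basisWord j)

theorem cosetAct_cocycle_involutive :
    ∀ i t, cosetAct i (cosetAct i t) = t ∧ cocycle i (cosetAct i t) * cocycle i t = 1 := by
  decide

theorem cosetAct_cocycle_comm : ∀ t, cosetAct 0 (cosetAct 2 t) = cosetAct 2 (cosetAct 0 t) ∧
    cocycle 0 (cosetAct 2 t) * cocycle 2 t = cocycle 2 (cosetAct 0 t) * cocycle 0 t := by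
  decide

theorem of_mul_transversal (i : Fin 3) (t : Fin 24) :
    of i * transversal t = transversal (cosetAct i t) * FreeGroup.lift basis (cocycle i t) := by
  have h20 : Commute (of 2 : TwinGroup 3) (of 0) := (commute_of_of (by decide)).symm
  -- Cancelling squares and moving `σ₀` left of `σ₂` is a confluent rewriting system for
  -- `B̄₄ = (ℤ/2 × ℤ/2) * ℤ/2`, so `simp` reaches the same normal form on both sides.
  fin_cases i <;> fin_cases t <;>
    simp [transversalWord, basisWord, cosetAct, cocycle, ofWord, mul_assoc, of_mul_self,
      of_mul_of_mul_cancel_left, inv_of, h20.eq, h20.left_comm]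

def cosetStep (i : Fin 3) (p : Fin 24 × FreeGroup (Fin 7)) : Fin 24 × FreeGroup (Fin 7) :=
  (cosetAct i p.1, cocycle i p.1 * p.2)

theorem cosetStep_involutive (i : Fin 3) : Function.Involutive (cosetStep i) := by
  rintro ⟨t, x⟩
  simp [cosetStep, ← mul_assoc, (cosetAct_cocycle_involutive i t).1,
    (cosetAct_cocycle_involutive i t).2]

def cosetPerm (i : Fin 3) : Equiv.Perm (Fin 24 × FreeGroup (Fin 7)) :=
  (cosetStep_involutive i).toPerm

theorem cosetPerm_mul_self (i : Fin 3) : cosetPerm i * cosetPerm i = 1 :=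
  Equiv.ext (cosetStep_involutive i)

theorem commute_cosetPerm {i j : Fin 3} (hij : (i : ℕ) + 1 < j) :
    Commute (cosetPerm i) (cosetPerm j) := by
  obtain ⟨rfl, rfl⟩ : i = 0 ∧ j = 2 := by omega
  refine Equiv.ext fun ⟨t, x⟩ => ?_
  simp [cosetPerm, cosetStep, ← mul_assoc, (cosetAct_cocycle_comm t).1,
    (cosetAct_cocycle_comm t).2]

def schreierAction : TwinGroup 3 →* Equiv.Perm (Fin 24 × FreeGroup (Fin 7)) :=
  TwinGroup.lift cosetPerm cosetPerm_mul_self fun _ _ => commute_cosetPerm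

theorem eq_zero_of_transversal_mem_ker : ∀ t, transversal t ∈ (twinPerm 3).ker → t = 0 := by
  simp only [MonoidHom.mem_ker, map_ofWord, twinPerm_of]
  decide

theorem basis_mem_ker : ∀ j, basis j ∈ (twinPerm 3).ker := by
  simp only [MonoidHom.mem_ker, map_ofWord, twinPerm_of]
  decide

theorem schreierAction_basis : ∀ j, schreierAction (basis j) (0, 1) = (0, FreeGroup.of j) := by
  simp only [map_ofWord, schreierAction, lift_of]
  decide

theorem schreierAction_mem_rightMulEquivariant (g : TwinGroup 3) :
    schreierAction g ∈ Equiv.Perm.rightMulEquivariant (Fin 24) (FreeGroup (Fin 7)) := by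
  refine generated_by _ ((Equiv.Perm.rightMulEquivariant _ _).comap schreierAction)
    (fun i => ?_) g
  simp [Subgroup.mem_comap, Equiv.Perm.mem_rightMulEquivariant_iff, schreierAction, lift_of,
    cosetPerm, cosetStep]

theorem mem_intertwiningSubgroup_schreierAction (g : TwinGroup 3) :
    g ∈ intertwiningSubgroup schreierAction
      fun p => transversal p.1 * FreeGroup.lift basis p.2 := by
  refine generated_by _ _ (fun i ⟨t, x⟩ => ?_) g
  simp only [schreierAction, lift_of, cosetPerm, Function.Involutive.coe_toPerm, cosetStep,
    map_mul, ← mul_assoc, ← of_mul_transversal]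

end PureTwinFour

/-- The pure twin group `P̄₄` is free of rank 7. -/
theorem pureTwin_four_free :
    Nonempty ((MonoidHom.ker (twinPerm 3)) ≃* FreeGroup (Fin 7)) :=
  Subgroup.nonempty_mulEquiv_freeGroup_of_schreierAction _ PureTwinFour.basis
    PureTwinFour.transversal 0 PureTwinFour.schreierAction PureTwinFour.basis_mem_ker rfl
    PureTwinFour.eq_zero_of_transversal_mem_ker
    PureTwinFour.schreierAction_mem_rightMulEquivariant
    PureTwinFour.mem_intertwiningSubgroup_schreierAction PureTwinFour.schreierAction_basis
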